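/- Let e ≥ 2, let p be any integer, let δ ∈ {1,2}, and let n be a positive integer with ν(n) ≥ e − 1. Then ν(Σ_{i ≥ 0} C(2^e + δ, 2i+1)·(2i+1)^p·((2i+1)^n − 1)) = 2^e + ν(n) − e + δ − 1, where the sum is a rational number (the factors (2i+1)^p being integer powers, possibly negative, of odd integers). -/

import Mathlib

/-!
Write `N = 2^e + δ`, `R = 2^(e-1)` and `a = ν(n)`. For a natural exponent `s`, expand
`(2j+1)^s ((2j+1)^n - 1) = Σ_{t ≥ 1, u} C(n,t) C(s,u) (2j)^(t+u)`, write
`j^i = Σ_r S(i,r) j(j-1)⋯(j-r+1)` with Stirling numbers of the second kind, and sum against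
`C(N, 2j+1)` using `Σ_j C(N,2j+1) C(j,r) = 2^(N-1-2r) C(N-1-r, r)`. Legendre's formula shows that
every resulting term has valuation at least `2^e + a - e + δ`, except the single term
`t = r = R`, `u = 0`, whose valuation is exactly `T = 2^e + a - e + δ - 1`.
A negative `p` is replaced by `s = p + 2^T |p| ≥ 0`: since `(2i+1)^(2^T) ≡ 1 mod 2^(T+1)`, this
changes the sum by an element of valuation `> T`, and the ultrametric inequality finishes.
-/

/-- `Σ_{i ≥ 0} C(2^e+δ, 2i+1)·(2i+1)^p·((2i+1)^n − 1)` as a rational number, where `p : ℤ`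
(so `(2i+1)^p` is a possibly negative integer power of the odd integer `2i+1`). -/
def lemSum (e δ : ℕ) (p : ℤ) (n : ℕ) : ℚ :=
  ∑ i ∈ Finset.range (2 ^ e + δ),
    (Nat.choose (2 ^ e + δ) (2 * i + 1) : ℚ) * (2 * (i : ℚ) + 1) ^ p *
      ((2 * (i : ℚ) + 1) ^ n - 1)

open Finset Nat

lemma digits_sum_add_base_pow_mul {b x k : ℕ} (hb : 1 < b) (hx : x < b ^ k) (m : ℕ) :
    (digits b (x + b ^ k * m)).sum = (digits b x).sum + (digits b m).sum := by
  rcases Nat.eq_zero_or_pos m with rfl | hm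
  · simp
  obtain ⟨d, hd⟩ := Nat.exists_eq_add_of_le ((digits_length_le_iff hb x).2 hx)
  rw [hd, ← digits_append_zeroes_append_digits hb hm]
  simp

lemma padicValNat_two_factorial_add_sum_digits (m : ℕ) :
    padicValNat 2 m ! + (digits 2 m).sum = m := by
  have h := sub_one_mul_padicValNat_factorial (p := 2) m
  have := digit_sum_le 2 m
  omega

lemma padicValNat_factorial_two_pow_add {k y : ℕ} (hy : y < 2 ^ k) :
    padicValNat 2 (2 ^ k + y)! = 2 ^ k - 1 + padicValNat 2 y ! := by
  have hsum := digits_sum_add_base_pow_mul one_lt_two hy 1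
  rw [mul_one, add_comm y, show (digits 2 1).sum = 1 by norm_num] at hsum
  have := padicValNat_two_factorial_add_sum_digits (2 ^ k + y)
  have := padicValNat_two_factorial_add_sum_digits y
  omega

lemma padicValNat_factorial_mono {p x y : ℕ} [Fact p.Prime] (h : x ≤ y) :
    padicValNat p x ! ≤ padicValNat p y ! :=
  (padicValNat_dvd_iff_le (factorial_ne_zero y)).1
    (pow_padicValNat_dvd.trans (factorial_dvd_factorial h))

lemma padicValNat_choose_two_pow_mul (k : ℕ) {m : ℕ} (hm : 0 < m) :
    padicValNat 2 ((2 ^ k * m).choose (2 ^ k)) = padicValNat 2 m := by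
  have hdig (x : ℕ) : (digits 2 (2 ^ k * x)).sum = (digits 2 x).sum := by
    simpa using digits_sum_add_base_pow_mul one_lt_two (Nat.two_pow_pos k) x
  have hone : (digits 2 (2 ^ k)).sum = 1 := by simpa using hdig 1
  have hchoose := sub_one_mul_padicValNat_choose_eq_sub_sum_digits (p := 2)
    (Nat.le_mul_of_pos_right (2 ^ k) hm)
  rw [← Nat.mul_sub_one, hdig, hdig, hone, show 2 - 1 = 1 from rfl, one_mul] at hchoose
  have hfac : padicValNat 2 m ! = padicValNat 2 m + padicValNat 2 (m - 1)! := by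
    conv_lhs => rw [← Nat.sub_add_cancel hm, factorial_succ]
    rw [padicValNat.mul (by omega) (factorial_ne_zero _), Nat.sub_add_cancel hm]
  have := padicValNat_two_factorial_add_sum_digits m
  have := padicValNat_two_factorial_add_sum_digits (m - 1)
  omega

-- For `M = 2^(k+1) + c` this says `ν((M - r)(M - r - 1)⋯(M - 2r + 1)) ≥ r - 1`.
lemma padicValNat_factorial_sub_two_mul_add_le {k c r : ℕ} (hc : c ≤ 1) (hr : 1 ≤ r)
    (hrk : r ≤ 2 ^ k) :
    padicValNat 2 (2 ^ (k + 1) + c - 2 * r)! + r ≤ padicValNat 2 (2 ^ (k + 1) + c - r)! + 1 := by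
  obtain ⟨x, hx⟩ : ∃ x, 2 ^ k = x + r := ⟨2 ^ k - r, by omega⟩
  have hdouble : padicValNat 2 (2 * x + c)! = padicValNat 2 x ! + x := by
    interval_cases c
    · exact padicValNat_factorial_mul x
    · rw [padicValNat_factorial_mul_add x one_lt_two, padicValNat_factorial_mul]
  rw [pow_succ, hx, show (x + r) * 2 + c - 2 * r = 2 * x + c by omega, hdouble]
  rcases lt_or_ge (x + c) (x + r) with hxc | hxc
  · rw [show (x + r) * 2 + c - r = 2 ^ k + (x + c) by omega,
      padicValNat_factorial_two_pow_add (by omega)]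
    have := padicValNat_factorial_mono (p := 2) (show x ≤ x + c by omega)
    omega
  · have := padicValNat_factorial_mono (p := 2) (show 2 * x + c ≤ (x + r) * 2 + c - r by omega)
    omega

lemma padicValNat_le_padicValNat_choose_add {p n t : ℕ} [Fact p.Prime] (ht : 1 ≤ t)
    (htn : t ≤ n) : padicValNat p n ≤ padicValNat p (n.choose t) + padicValNat p t := by
  have hid := add_one_mul_choose_eq (n - 1) (t - 1)
  rw [Nat.sub_add_cancel (by omega), Nat.sub_add_cancel ht] at hid
  have hval := congrArg (padicValNat p) hid
  rw [padicValNat.mul (by omega) (choose_pos (by omega)).ne',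
    padicValNat.mul (choose_pos htn).ne' (by omega)] at hval
  omega

def oddChooseSum (N r : ℕ) : ℕ := ∑ j ∈ range (N + 1), N.choose (2 * j + 1) * j.choose r

def evenChooseSum (N r : ℕ) : ℕ := ∑ j ∈ range (N + 1), N.choose (2 * j) * j.choose r

lemma oddChooseSum_succ (N r : ℕ) :
    oddChooseSum (N + 1) r = evenChooseSum N r + oddChooseSum N r := by
  rw [oddChooseSum, sum_range_succ, choose_eq_zero_of_lt (by omega), zero_mul, add_zero]
  simp only [choose_succ_succ', add_mul, sum_add_distrib, evenChooseSum, oddChooseSum]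

lemma evenChooseSum_succ (N r : ℕ) :
    evenChooseSum (N + 1) r
      = evenChooseSum N r + ∑ j ∈ range (N + 1), N.choose (2 * j + 1) * (j + 1).choose r := by
  have hpascal (j : ℕ) :
      (N + 1).choose (2 * (j + 1)) = N.choose (2 * j + 1) + N.choose (2 * (j + 1)) :=
    choose_succ_succ' N (2 * j + 1)
  have hE : evenChooseSum N r = ∑ j ∈ range (N + 1), N.choose (2 * (j + 1)) * (j + 1).choose r
      + (0 : ℕ).choose r := by
    rw [evenChooseSum, sum_range_succ', sum_range_succ (fun j ↦ N.choose (2 * (j + 1)) * _) N,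
      choose_eq_zero_of_lt (show N < 2 * (N + 1) by omega)]
    simp
  rw [evenChooseSum, sum_range_succ', hE]
  simp only [hpascal, add_mul, sum_add_distrib, mul_zero, choose_zero_right]
  ring

lemma evenChooseSum_succ_zero (N : ℕ) : evenChooseSum (N + 1) 0 = oddChooseSum (N + 1) 0 := by
  rw [evenChooseSum_succ, oddChooseSum_succ]
  simp [oddChooseSum]

lemma evenChooseSum_succ_succ (N r : ℕ) :
    evenChooseSum (N + 1) (r + 1) = oddChooseSum (N + 1) (r + 1) + oddChooseSum N r := by
  rw [evenChooseSum_succ, oddChooseSum_succ]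
  simp only [oddChooseSum, choose_succ_succ', mul_add, sum_add_distrib]
  ring

-- Multiplied out so that no truncated subtraction `N - 2r` appears in an exponent.
lemma two_pow_mul_oddChooseSum (N r : ℕ) :
    2 ^ (2 * r) * oddChooseSum (N + 1) r = 2 ^ N * (N - r).choose r := by
  induction N using Nat.twoStepInduction generalizing r with
  | zero => cases r <;> simp [oddChooseSum, sum_range_succ, choose_eq_zero_of_lt]
  | one => rcases r with _ | _ | r <;> simp [oddChooseSum, sum_range_succ, choose_eq_zero_of_lt]
  | more N ih₀ ih₁ =>
    rcases r with _ | r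
    · have h := ih₁ 0
      rw [oddChooseSum_succ, evenChooseSum_succ_zero]
      simp only [choose_zero_right] at h ⊢
      linear_combination 2 * h
    · rw [oddChooseSum_succ, evenChooseSum_succ_succ]
      have h₁ := ih₁ (r + 1)
      have h₀ := ih₀ r
      have hpascal : (N + 1 - (r + 1)).choose (r + 1) + (N - r).choose r
          = (N + 2 - (r + 1)).choose (r + 1) := by
        rcases le_or_gt r N with hr | hr
        · rw [show N + 2 - (r + 1) = N - r + 1 by omega, show N + 1 - (r + 1) = N - r by omega,
            choose_succ_succ', add_comm]
        · rw [show N - r = 0 by omega, show N + 2 - (r + 1) = 0 by omega,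
            show N + 1 - (r + 1) = 0 by omega, choose_eq_zero_of_lt (by omega : 0 < r), add_zero]
      linear_combination 2 * h₁ + 4 * h₀ + 2 ^ (N + 2) * hpascal

lemma oddChooseSum_eq_of_two_mul_le {M r : ℕ} (h : 2 * r ≤ M) :
    oddChooseSum (M + 1) r = 2 ^ (M - 2 * r) * (M - r).choose r := by
  have hclosed := two_pow_mul_oddChooseSum M r
  rw [show 2 ^ M = 2 ^ (2 * r) * 2 ^ (M - 2 * r) by rw [← pow_add]; congr 1; omega,
    mul_assoc] at hclosed
  exact Nat.eq_of_mul_eq_mul_left (by positivity) hclosed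

lemma oddChooseSum_eq_zero_of_lt {N r : ℕ} (h : N < 2 * r + 1) : oddChooseSum N r = 0 := by
  refine sum_eq_zero fun j _ ↦ ?_
  rcases lt_or_ge j r with hj | hj
  · rw [choose_eq_zero_of_lt hj, mul_zero]
  · rw [choose_eq_zero_of_lt (by omega), zero_mul]

lemma padicValNat_factorial_mul_oddChooseSum {M r : ℕ} (h : 2 * r ≤ M) :
    padicValNat 2 (r ! * oddChooseSum (M + 1) r) + padicValNat 2 (M - 2 * r)!
      = M - 2 * r + padicValNat 2 (M - r)! := by
  have hdesc : r ! * oddChooseSum (M + 1) r = 2 ^ (M - 2 * r) * (M - r).descFactorial r := by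
    rw [oddChooseSum_eq_of_two_mul_le h, descFactorial_eq_factorial_mul_choose]
    ring
  have hfac := factorial_mul_descFactorial (show r ≤ M - r by omega)
  rw [show M - r - r = M - 2 * r by omega] at hfac
  have hpos : (M - r).descFactorial r ≠ 0 := (descFactorial_pos.2 (by omega)).ne'
  rw [hdesc, padicValNat.mul (pow_ne_zero _ two_ne_zero) hpos, padicValNat.prime_pow, ← hfac,
    padicValNat.mul (factorial_ne_zero _) hpos]
  ring

lemma mul_descFactorial (j r : ℕ) :
    j * j.descFactorial r = j.descFactorial (r + 1) + r * j.descFactorial r := by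
  rcases le_or_gt r j with h | h
  · rw [descFactorial_succ, ← add_mul, Nat.sub_add_cancel h]
  · rw [descFactorial_eq_zero_iff_lt.2 h, descFactorial_eq_zero_iff_lt.2 (by omega)]
    simp

lemma pow_eq_sum_stirlingSecond_mul_descFactorial (j i : ℕ) :
    j ^ i = ∑ r ∈ range (i + 1), stirlingSecond i r * j.descFactorial r := by
  induction i with
  | zero => simp
  | succ i ih =>
    have hshift : ∑ r ∈ range (i + 1), r * stirlingSecond i r * j.descFactorial r
        = ∑ r ∈ range (i + 1),
            (r + 1) * stirlingSecond i (r + 1) * j.descFactorial (r + 1) := by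
      rw [sum_range_succ', sum_range_succ, stirlingSecond_eq_zero_of_lt (lt_add_one i)]
      simp
    calc j ^ (i + 1)
        = ∑ r ∈ range (i + 1), (stirlingSecond i r * j.descFactorial (r + 1)
            + r * stirlingSecond i r * j.descFactorial r) := by
          rw [pow_succ, ih, sum_mul]
          refine sum_congr rfl fun r _ ↦ ?_
          rw [mul_assoc, mul_comm _ j, mul_descFactorial]
          ring
      _ = ∑ r ∈ range (i + 1), stirlingSecond (i + 1) (r + 1) * j.descFactorial (r + 1) := by
          rw [sum_add_distrib, hshift, ← sum_add_distrib]
          refine sum_congr rfl fun r _ ↦ ?_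
          rw [stirlingSecond_succ_succ]
          ring
      _ = _ := by
          rw [sum_range_succ' _ (i + 1), stirlingSecond_succ_zero, zero_mul, add_zero]

lemma sum_choose_odd_mul_descFactorial (N r : ℕ) :
    ∑ j ∈ range N, N.choose (2 * j + 1) * j.descFactorial r = r ! * oddChooseSum N r := by
  rw [oddChooseSum, mul_sum, sum_range_succ, choose_eq_zero_of_lt (by omega), zero_mul, mul_zero,
    add_zero]
  refine sum_congr rfl fun j _ ↦ ?_
  rw [descFactorial_eq_factorial_mul_choose]
  ring

-- Index `(t, u, r)`: `t + 1` is the power of `2j` taken from `(2j+1)^n - 1`, `u` the one taken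
-- from `(2j+1)^s`, and `r` the index of the Stirling expansion of `j^(t+1+u)`.
def expansionCoeff (n s t u r : ℕ) : ℕ :=
  n.choose (t + 1) * s.choose u * 2 ^ (t + 1 + u) * stirlingSecond (t + 1 + u) r

lemma odd_pow_mul_pow_sub_one_eq_sum (n s j : ℕ) :
    (2 * (j : ℚ) + 1) ^ s * ((2 * (j : ℚ) + 1) ^ n - 1)
      = ∑ t ∈ range n, ∑ u ∈ range (s + 1), ∑ r ∈ range (n + s + 1),
          ((expansionCoeff n s t u r * j.descFactorial r : ℕ) : ℚ) := by
  have hstirling (i : ℕ) (hi : i < n + s + 1) :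
      (j : ℚ) ^ i
        = ∑ r ∈ range (n + s + 1), ((stirlingSecond i r * j.descFactorial r : ℕ) : ℚ) := by
    rw [← Nat.cast_pow, pow_eq_sum_stirlingSecond_mul_descFactorial, Nat.cast_sum]
    refine sum_subset (range_subset_range.2 hi) fun r _ hr ↦ ?_
    rw [stirlingSecond_eq_zero_of_lt (by simpa using hr), zero_mul, Nat.cast_zero]
  have hsub : (2 * (j : ℚ) + 1) ^ n - 1
      = ∑ t ∈ range n, (2 * (j : ℚ)) ^ (t + 1) * n.choose (t + 1) := by
    rw [add_pow, sum_range_succ']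
    simp
  rw [add_pow, hsub, sum_mul_sum, sum_comm]
  refine sum_congr rfl fun t ht ↦ sum_congr rfl fun u hu ↦ ?_
  rw [mem_range] at ht hu
  rw [show (2 * (j : ℚ)) ^ u * 1 ^ (s - u) * s.choose u * ((2 * j) ^ (t + 1) * n.choose (t + 1))
      = (n.choose (t + 1) * s.choose u * 2 ^ (t + 1 + u) : ℕ) * (j : ℚ) ^ (t + 1 + u) by
        push_cast; ring,
    hstirling _ (by omega), mul_sum]
  refine sum_congr rfl fun r _ ↦ ?_
  rw [expansionCoeff]
  push_cast
  ring

def expansionTerm (N n s t u r : ℕ) : ℕ :=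
  expansionCoeff n s t u r * (r ! * oddChooseSum N r)

lemma sum_choose_odd_mul_pow_eq_sum_expansionTerm (N n s : ℕ) :
    ∑ j ∈ range N,
        (N.choose (2 * j + 1) : ℚ) * (2 * (j : ℚ) + 1) ^ s * ((2 * (j : ℚ) + 1) ^ n - 1)
      = ∑ x ∈ range n ×ˢ range (s + 1) ×ˢ range (n + s + 1),
          (expansionTerm N n s x.1 x.2.1 x.2.2 : ℚ) := by
  simp only [mul_assoc, odd_pow_mul_pow_sub_one_eq_sum, mul_sum, sum_product, expansionTerm]
  rw [sum_comm]
  refine sum_congr rfl fun t _ ↦ ?_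
  rw [sum_comm]
  refine sum_congr rfl fun u _ ↦ ?_
  rw [sum_comm]
  refine sum_congr rfl fun r _ ↦ ?_
  rw [← sum_choose_odd_mul_descFactorial, mul_sum]
  push_cast
  refine sum_congr rfl fun j _ ↦ ?_
  ring

-- The exponent count behind `two_pow_dvd_expansionTerm`, with `v = ν(t)`.
lemma add_add_one_le_of_two_pow_le {k v t i r : ℕ} (hk : 1 ≤ k) (hv : 2 ^ v ≤ t)
    (hti : t ≤ i) (hri : r ≤ i) (hrk : r ≤ 2 ^ k)
    (hne : ¬(r = 2 ^ k ∧ i = 2 ^ k ∧ t = 2 ^ k)) :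
    v + r + 1 ≤ i + k := by
  rcases lt_trichotomy v k with hvk | rfl | hvk
  · omega
  · by_cases hi : i = 2 ^ v
    · have : t = 2 ^ v := by omega
      have : r ≠ 2 ^ v := fun h ↦ hne ⟨h, hi, this⟩
      omega
    · omega
  · obtain ⟨d, rfl⟩ : ∃ d, v = k + 1 + d := ⟨v - k - 1, by omega⟩
    have hd : d + 1 < 2 ^ (d + 1) := Nat.lt_two_pow_self
    have hk2 : 2 ≤ 2 ^ k := by
      calc 2 = 2 ^ 1 := rfl
        _ ≤ 2 ^ k := pow_le_pow_right₀ one_le_two hk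
    have hsplit : 2 ^ (k + 1 + d) = 2 ^ k * 2 ^ (d + 1) := by rw [← pow_add]; ring_nf
    nlinarith

section TermValuation

variable {N n s t u r : ℕ}

lemma le_of_expansionTerm_ne_zero (hX : expansionTerm N n s t u r ≠ 0) :
    t + 1 ≤ n ∧ 1 ≤ r ∧ r ≤ t + 1 + u ∧ 2 * r < N := by
  simp only [expansionTerm, expansionCoeff, mul_ne_zero_iff] at hX
  obtain ⟨⟨⟨⟨hCn, -⟩, -⟩, hS⟩, -, hO⟩ := hX
  refine ⟨?_, ?_, ?_, ?_⟩
  · by_contra h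
    exact hCn (choose_eq_zero_of_lt (by omega))
  · by_contra h
    obtain rfl : r = 0 := by omega
    exact hS (by rw [add_right_comm]; exact stirlingSecond_succ_zero (t + u))
  · by_contra h
    exact hS (stirlingSecond_eq_zero_of_lt (by omega))
  · by_contra h
    exact hO (oddChooseSum_eq_zero_of_lt (by omega))

lemma padicValNat_expansionTerm (hX : expansionTerm N n s t u r ≠ 0) :
    padicValNat 2 (expansionTerm N n s t u r)
      = padicValNat 2 (n.choose (t + 1)) + padicValNat 2 (s.choose u) + (t + 1 + u)
        + padicValNat 2 (stirlingSecond (t + 1 + u) r)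
        + padicValNat 2 (r ! * oddChooseSum N r) := by
  simp only [expansionTerm, expansionCoeff] at hX ⊢
  obtain ⟨hcoeff, hfac⟩ := mul_ne_zero_iff.1 hX
  obtain ⟨hCCp, hS⟩ := mul_ne_zero_iff.1 hcoeff
  obtain ⟨hCC, hpow⟩ := mul_ne_zero_iff.1 hCCp
  obtain ⟨hCn, hCs⟩ := mul_ne_zero_iff.1 hCC
  rw [padicValNat.mul hcoeff hfac, padicValNat.mul hCCp hS, padicValNat.mul hCC hpow,
    padicValNat.mul hCn hCs, padicValNat.prime_pow]

end TermValuation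

section MainTerm

variable {k c n : ℕ}

lemma two_pow_dvd_expansionTerm (hk : 1 ≤ k) (hc : c ≤ 1) (hkn : k ≤ padicValNat 2 n)
    (s : ℕ) {t u r : ℕ} (hne : (t, u, r) ≠ (2 ^ k - 1, 0, 2 ^ k)) :
    2 ^ (2 ^ (k + 1) + c + padicValNat 2 n - k)
      ∣ expansionTerm (2 ^ (k + 1) + c + 1) n s t u r := by
  by_cases hX : expansionTerm (2 ^ (k + 1) + c + 1) n s t u r = 0
  · rw [hX]
    exact dvd_zero _
  obtain ⟨htn, hr, hri, hrN⟩ := le_of_expansionTerm_ne_zero hX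
  have hrM : 2 * r ≤ 2 ^ (k + 1) + c := by omega
  have hrk : r ≤ 2 ^ k := by rw [pow_succ] at hrM; omega
  have hchoose := padicValNat_le_padicValNat_choose_add (p := 2) (by omega : 1 ≤ t + 1) htn
  have harith := add_add_one_le_of_two_pow_le hk
    (Nat.le_of_dvd (by omega) pow_padicValNat_dvd) (Nat.le_add_right (t + 1) u) hri hrk
    (by rintro ⟨rfl, hi, ht⟩; exact hne (by simp only [Prod.mk.injEq, and_true]; omega))
  have hsum := padicValNat_factorial_mul_oddChooseSum hrM
  have hfacs := padicValNat_factorial_sub_two_mul_add_le hc hr hrk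
  rw [padicValNat_dvd_iff_le hX, padicValNat_expansionTerm hX]
  omega

lemma padicValNat_expansionTerm_top (hk : 1 ≤ k) (hc : c ≤ 1) (hn : 0 < n)
    (hkn : k ≤ padicValNat 2 n) (s : ℕ) :
    expansionTerm (2 ^ (k + 1) + c + 1) n s (2 ^ k - 1) 0 (2 ^ k) ≠ 0 ∧
      padicValNat 2 (expansionTerm (2 ^ (k + 1) + c + 1) n s (2 ^ k - 1) 0 (2 ^ k))
        = 2 ^ (k + 1) + c + padicValNat 2 n - k - 1 := by
  obtain ⟨m, rfl⟩ := (padicValNat_dvd_iff_le hn.ne').2 hkn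
  have hm : m ≠ 0 := by rintro rfl; simp at hn
  have hck : c < 2 ^ k := lt_of_le_of_lt hc (Nat.one_lt_two_pow (by omega))
  have hM : 2 * 2 ^ k ≤ 2 ^ (k + 1) + c := by rw [pow_succ]; omega
  have hCn : (2 ^ k * m).choose (2 ^ k) ≠ 0 :=
    (choose_pos (Nat.le_mul_of_pos_right _ (by omega))).ne'
  have hO : oddChooseSum (2 ^ (k + 1) + c + 1) (2 ^ k) ≠ 0 := by
    rw [oddChooseSum_eq_of_two_mul_le hM]
    exact mul_ne_zero (by positivity) (choose_pos (by omega)).ne'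
  have hX : expansionTerm (2 ^ (k + 1) + c + 1) (2 ^ k * m) s (2 ^ k - 1) 0 (2 ^ k) ≠ 0 := by
    simp only [expansionTerm, expansionCoeff, Nat.sub_add_cancel Nat.one_le_two_pow, add_zero,
      choose_zero_right, mul_one, stirlingSecond_self]
    exact mul_ne_zero (mul_ne_zero hCn (by positivity)) (mul_ne_zero (factorial_ne_zero _) hO)
  have hsum := padicValNat_factorial_mul_oddChooseSum hM
  rw [show 2 ^ (k + 1) + c - 2 * 2 ^ k = c by rw [pow_succ]; omega,
    show 2 ^ (k + 1) + c - 2 ^ k = 2 ^ k + c by rw [pow_succ]; omega,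
    padicValNat_factorial_two_pow_add hck] at hsum
  have hc0 : padicValNat 2 c ! = 0 := by interval_cases c <;> simp
  refine ⟨hX, ?_⟩
  rw [padicValNat_expansionTerm hX]
  simp only [Nat.sub_add_cancel Nat.one_le_two_pow, add_zero, choose_zero_right,
    stirlingSecond_self, padicValNat_one_right]
  rw [padicValNat_choose_two_pow_mul k (by omega), padicValNat.mul (by positivity) hm,
    padicValNat.prime_pow]
  omega

end MainTerm

lemma padicNorm_natCast_eq {p X : ℕ} (hX : X ≠ 0) :
    padicNorm p (X : ℚ) = (p : ℚ) ^ (-(padicValNat p X : ℤ)) := by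
  rw [padicNorm.eq_zpow_of_nonzero (by exact_mod_cast hX), padicValRat.of_nat]

section PadicNorm

variable {p : ℕ} [Fact p.Prime]

lemma padicNorm_add_eq_of_lt {x y : ℚ} (h : padicNorm p y < padicNorm p x) :
    padicNorm p (x + y) = padicNorm p x := by
  rw [padicNorm.add_eq_max_of_ne h.ne', max_eq_left h.le]

lemma padicNorm_sum_eq_of_lt {ι : Type*} [DecidableEq ι] {s : Finset ι} {f : ι → ℚ}
    {i₀ : ι} (hi₀ : i₀ ∈ s)
    (h : ∀ i ∈ s, i ≠ i₀ → padicNorm p (f i) < padicNorm p (f i₀)) :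
    padicNorm p (∑ i ∈ s, f i) = padicNorm p (f i₀) := by
  rw [← add_sum_erase s f hi₀]
  rcases (s.erase i₀).eq_empty_or_nonempty with he | he
  · simp [he]
  · exact padicNorm_add_eq_of_lt
      (padicNorm.sum_lt he fun i hi ↦ h i (mem_of_mem_erase hi) (ne_of_mem_erase hi))

lemma padicNorm_intCast_lt_of_dvd {z : ℤ} {T : ℕ} (h : (p : ℤ) ^ (T + 1) ∣ z) :
    padicNorm p (z : ℚ) < (p : ℚ) ^ (-(T : ℤ)) := by
  have hp : (1 : ℚ) < p := by exact_mod_cast (Fact.out : p.Prime).one_lt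
  calc padicNorm p (z : ℚ) ≤ (p : ℚ) ^ (-((T + 1 : ℕ) : ℤ)) :=
        padicNorm.dvd_iff_norm_le.1 (by exact_mod_cast h)
    _ < (p : ℚ) ^ (-(T : ℤ)) := zpow_lt_zpow_right₀ hp (by omega)

lemma eq_padicValRat_of_padicNorm_eq {q : ℚ} {T : ℤ} (h : padicNorm p q = (p : ℚ) ^ (-T)) :
    q ≠ 0 ∧ padicValRat p q = T := by
  have hp : (1 : ℚ) < p := by exact_mod_cast (Fact.out : p.Prime).one_lt
  have hq : q ≠ 0 := by
    rintro rfl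
    rw [padicNorm.zero] at h
    exact (zpow_ne_zero _ (by positivity)) h.symm
  rw [padicNorm.eq_zpow_of_nonzero hq] at h
  exact ⟨hq, neg_injective (zpow_right_injective₀ (by positivity) hp.ne' h)⟩

lemma padicNorm_natCast_lt_of_dvd {X T : ℕ} (h : p ^ (T + 1) ∣ X) :
    padicNorm p (X : ℚ) < (p : ℚ) ^ (-(T : ℤ)) := by
  simpa using padicNorm_intCast_lt_of_dvd (z := X) (by exact_mod_cast h)

end PadicNorm

lemma padicNorm_two_mul_add_one_zpow (i : ℕ) (q : ℤ) :
    padicNorm 2 ((2 * (i : ℚ) + 1) ^ q) = 1 := by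
  have hx : 2 * (i : ℚ) + 1 = ((2 * i + 1 : ℕ) : ℚ) := by push_cast; ring
  rw [hx, padicNorm.eq_zpow_of_nonzero (zpow_ne_zero _ (by positivity)), padicValRat.zpow,
    padicValRat.of_nat, padicValNat.eq_zero_of_not_dvd (by omega)]
  simp

lemma two_pow_succ_dvd_pow_two_pow_sub_one {x : ℤ} (hx : Odd x) (B : ℕ) :
    2 ^ (B + 1) ∣ x ^ 2 ^ B - 1 := by
  induction B with
  | zero => simpa [even_iff_two_dvd] using hx.sub_odd odd_one
  | succ B ih =>
    have hfactor : x ^ 2 ^ (B + 1) - 1 = (x ^ 2 ^ B - 1) * (x ^ 2 ^ B + 1) := by ring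
    rw [hfactor, pow_succ 2 (B + 1)]
    exact mul_dvd_mul ih (even_iff_two_dvd.1 (hx.pow.add_odd odd_one))

lemma padicNorm_lemSum_sub_lemSum_lt (e δ n T m : ℕ) (p : ℤ) :
    padicNorm 2 (lemSum e δ p n - lemSum e δ (p + 2 ^ T * m) n) < 2 ^ (-(T : ℤ)) := by
  rw [lemSum, lemSum, ← sum_sub_distrib]
  refine padicNorm.sum_lt' (fun i _ ↦ ?_) (by positivity)
  set C := (2 ^ e + δ).choose (2 * i + 1)
  set x : ℚ := 2 * (i : ℚ) + 1 with hx
  let z : ℤ := C * ((2 * i + 1) ^ n - 1) * ((2 * i + 1) ^ (2 ^ T * m) - 1)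
  have hterm : C * x ^ p * (x ^ n - 1) - C * x ^ (p + 2 ^ T * m) * (x ^ n - 1)
      = ((-z : ℤ) : ℚ) * x ^ p := by
    rw [zpow_add₀ (by positivity),
      show (2 : ℤ) ^ T * m = ((2 ^ T * m : ℕ) : ℤ) by push_cast; ring, zpow_natCast]
    simp only [z, hx]
    push_cast
    ring
  have hdvd : (2 : ℤ) ^ (T + 1) ∣ (2 * i + 1) ^ (2 ^ T * m) - 1 := by
    rw [pow_mul']
    exact two_pow_succ_dvd_pow_two_pow_sub_one (odd_two_mul_add_one (i : ℤ)).pow T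
  rw [hterm, padicNorm.mul, padicNorm_two_mul_add_one_zpow, mul_one]
  exact padicNorm_intCast_lt_of_dvd (by exact_mod_cast dvd_neg.2 (hdvd.mul_left _))

lemma padicNorm_lemSum_natCast_eq {k c n : ℕ} (hk : 1 ≤ k) (hc : c ≤ 1) (hn : 0 < n)
    (hkn : k ≤ padicValNat 2 n) (s : ℕ) :
    padicNorm 2 (lemSum (k + 1) (c + 1) s n)
      = 2 ^ (-((2 ^ (k + 1) + c + padicValNat 2 n - k - 1 : ℕ) : ℤ)) := by
  have hsum : lemSum (k + 1) (c + 1) s n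
      = ∑ x ∈ range n ×ˢ range (s + 1) ×ˢ range (n + s + 1),
          (expansionTerm (2 ^ (k + 1) + c + 1) n s x.1 x.2.1 x.2.2 : ℚ) := by
    rw [lemSum]
    simp only [zpow_natCast]
    exact sum_choose_odd_mul_pow_eq_sum_expansionTerm _ n s
  have hkn' : 2 ^ k ≤ n := Nat.le_of_dvd hn ((padicValNat_dvd_iff_le hn.ne').2 hkn)
  have hk2 : k + 1 < 2 ^ (k + 1) := Nat.lt_two_pow_self
  obtain ⟨htop, hval⟩ := padicValNat_expansionTerm_top hk hc hn hkn s
  have htop_norm :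
      padicNorm 2 (expansionTerm (2 ^ (k + 1) + c + 1) n s (2 ^ k - 1) 0 (2 ^ k) : ℚ)
        = 2 ^ (-((2 ^ (k + 1) + c + padicValNat 2 n - k - 1 : ℕ) : ℤ)) := by
    rw [padicNorm_natCast_eq htop, hval, Nat.cast_ofNat]
  rw [hsum, padicNorm_sum_eq_of_lt (i₀ := (2 ^ k - 1, 0, 2 ^ k)), htop_norm]
  · simp only [mem_product, mem_range]
    omega
  · rintro ⟨t, u, r⟩ - hne
    rw [htop_norm, ← Nat.cast_ofNat (R := ℚ) (n := 2)]
    refine padicNorm_natCast_lt_of_dvd ?_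
    rw [show 2 ^ (k + 1) + c + padicValNat 2 n - k - 1 + 1
        = 2 ^ (k + 1) + c + padicValNat 2 n - k by omega]
    exact two_pow_dvd_expansionTerm hk hc hkn s hne

theorem stmt9 (e δ n : ℕ) (p : ℤ) (he : 2 ≤ e) (hδ : δ = 1 ∨ δ = 2) (hn : 0 < n)
    (hν : e - 1 ≤ padicValNat 2 n) :
    lemSum e δ p n ≠ 0 ∧
    padicValRat 2 (lemSum e δ p n)
      = 2 ^ e + (padicValNat 2 n : ℤ) - (e : ℤ) + (δ : ℤ) - 1 := by
  obtain ⟨k, rfl⟩ : ∃ k, e = k + 1 := ⟨e - 1, by omega⟩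
  obtain ⟨c, rfl⟩ : ∃ c, δ = c + 1 := ⟨δ - 1, by omega⟩
  set T := 2 ^ (k + 1) + c + padicValNat 2 n - k - 1
  obtain ⟨s, hs⟩ : ∃ s : ℕ, (s : ℤ) = p + 2 ^ T * p.natAbs := by
    refine ⟨_, Int.toNat_of_nonneg ?_⟩
    have : (1 : ℤ) ≤ 2 ^ T := one_le_pow₀ one_le_two
    rw [Int.natCast_natAbs]
    nlinarith [abs_nonneg p, neg_abs_le p]
  have hnorm : padicNorm 2 (lemSum (k + 1) (c + 1) p n) = 2 ^ (-(T : ℤ)) := by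
    have hred := padicNorm_lemSum_sub_lemSum_lt (k + 1) (c + 1) n T p.natAbs p
    rw [← hs] at hred
    rw [← padicNorm_lemSum_natCast_eq (by omega) (by omega) hn (by omega) s] at hred ⊢
    rw [← add_sub_cancel (lemSum (k + 1) (c + 1) s n) (lemSum (k + 1) (c + 1) p n)]
    exact padicNorm_add_eq_of_lt hred
  obtain ⟨hne, hval⟩ := eq_padicValRat_of_padicNorm_eq (p := 2) (by exact_mod_cast hnorm)
  refine ⟨hne, ?_⟩
  have : k + 1 < 2 ^ (k + 1) := Nat.lt_two_pow_self
  have hcast : ((2 ^ (k + 1) : ℕ) : ℤ) = 2 ^ (k + 1) := by push_cast; rfl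
  rw [hval]
  omega
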